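/- arXiv:2103.13021 — 3 statements merged into one kernel-verified Lean document; each statement's English description precedes it below -/
import Mathlib

section
/- Suppose ρ = 0, so Q^n_{ij} = −L^n_j and Q^o_{ij} = −L^o_j are constant in i. In any integral optimal solution of the MCOSS problem (minimizing Σ_{i,j} z^o_{ij} Q^o_{ij} + Σ_{i,j} z^n_{ij} Q^n_{ij} + λ Σ_j max_i z^n_{ij} subject to each row i having exactly one representative, z ∈ {0,1}), at most one index j from the new set has Σ_i z^n_{ij} > 0, provided the values L^n_1,…,L^n_m are pairwise distinct. -/
/-- The MCOSS objective with `p = ∞`: pairwise-free case is obtained by taking the `Q`'s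
constant in `i`. -/
noncomputable def mcossObj (m r : ℕ) (hm : 0 < m)
    (Qo : Fin m → Fin r → ℝ) (Qn : Fin m → Fin m → ℝ) (lam : ℝ)
    (zo : Fin m → Fin r → ℝ) (zn : Fin m → Fin m → ℝ) : ℝ :=
  (∑ i, ∑ j, zo i j * Qo i j) + (∑ i, ∑ j, zn i j * Qn i j) +
    lam * ∑ j, Finset.univ.sup' (Finset.univ_nonempty_iff.mpr ⟨⟨0, hm⟩⟩) (fun i => zn i j)

lemma mcoss_key (m r : ℕ) (hm : 0 < m)
    (Lo : Fin r → ℝ) (Ln : Fin m → ℝ)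
    (lam : ℝ) (hlam : 0 < lam)
    (zo : Fin m → Fin r → ℝ) (zn : Fin m → Fin m → ℝ)
    (hio : ∀ i j, zo i j = 0 ∨ zo i j = 1) (hin : ∀ i j, zn i j = 0 ∨ zn i j = 1)
    (hrow : ∀ i, (∑ j, zo i j) + (∑ j, zn i j) = 1)
    (hopt : ∀ (zo' : Fin m → Fin r → ℝ) (zn' : Fin m → Fin m → ℝ),
      (∀ i j, zo' i j = 0 ∨ zo' i j = 1) → (∀ i j, zn' i j = 0 ∨ zn' i j = 1) →
      (∀ i, (∑ j, zo' i j) + (∑ j, zn' i j) = 1) →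
      mcossObj m r hm (fun _ j => -Lo j) (fun _ j => -Ln j) lam zo zn ≤
        mcossObj m r hm (fun _ j => -Lo j) (fun _ j => -Ln j) lam zo' zn')
    (j j' : Fin m) (hne : j ≠ j') (hlt : Ln j' ≤ Ln j)
    (hpos : 0 < ∑ i, zn i j) (hpos' : 0 < ∑ i, zn i j') : False := by
  classical
  -- basic bounds
  have hn0 : ∀ i k, 0 ≤ zn i k := by
    intro i k; rcases hin i k with h | h <;> rw [h] <;> norm_num
  have hn1 : ∀ i k, zn i k ≤ 1 := by
    intro i k; rcases hin i k with h | h <;> rw [h] <;> norm_num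
  have ho0 : ∀ i k, 0 ≤ zo i k := by
    intro i k; rcases hio i k with h | h <;> rw [h] <;> norm_num
  have hzsum : ∀ i, ∑ k, zn i k ≤ 1 := by
    intro i
    have h1 : 0 ≤ ∑ k, zo i k := Finset.sum_nonneg fun k _ => ho0 i k
    linarith [hrow i]
  have hpair : ∀ i, zn i j + zn i j' ≤ 1 := by
    intro i
    have hsub : ({j, j'} : Finset (Fin m)) ⊆ Finset.univ := Finset.subset_univ _
    have := Finset.sum_le_sum_of_subset_of_nonneg hsub (fun k _ _ => hn0 i k)
    rw [Finset.sum_pair hne] at this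
    linarith [hzsum i]
  -- the modified solution
  set zn' : Fin m → Fin m → ℝ := fun i k =>
    if k = j then zn i j + zn i j' else if k = j' then 0 else zn i k with hzn'
  have hzn'01 : ∀ i k, zn' i k = 0 ∨ zn' i k = 1 := by
    intro i k
    simp only [hzn']
    by_cases h1 : k = j
    · simp only [h1, if_pos rfl]
      rcases hin i j with h | h <;> rcases hin i j' with h' | h' <;>
        rw [h, h'] <;> [left; right; right; skip] <;> try norm_num
      exfalso; have := hpair i; rw [h, h'] at this; linarith
    · by_cases h2 : k = j'
      · subst h2; simp [Ne.symm hne]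
      · simp only [if_neg h1, if_neg h2]; exact hin i k
  -- pointwise decomposition
  have hpt : ∀ i k, zn' i k = zn i k + (if k = j then zn i j' else 0)
      - (if k = j' then zn i j' else 0) := by
    intro i k
    simp only [hzn']
    by_cases h1 : k = j
    · subst h1; simp [hne]; try ring
    · by_cases h2 : k = j'
      · subst h2; simp [h1, Ne.symm hne]; try ring
      · simp [h1, h2]; try ring
  have hrowsum : ∀ i, ∑ k, zn' i k = ∑ k, zn i k := by
    intro i
    simp only [hpt]
    rw [Finset.sum_sub_distrib, Finset.sum_add_distrib]
    simp [Finset.sum_ite_eq']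
  have hrow' : ∀ i, (∑ k, zo i k) + (∑ k, zn' i k) = 1 := by
    intro i; rw [hrowsum]; exact hrow i
  -- linear term
  have hlin : ∑ i, ∑ k, zn' i k * (-Ln k)
      = (∑ i, ∑ k, zn i k * (-Ln k)) + (∑ i, zn i j') * (Ln j' - Ln j) := by
    have : ∀ i, ∑ k, zn' i k * (-Ln k)
        = (∑ k, zn i k * (-Ln k)) + zn i j' * (Ln j' - Ln j) := by
      intro i
      simp only [hpt]
      have : ∀ k, (zn i k + (if k = j then zn i j' else 0)
          - (if k = j' then zn i j' else 0)) * (-Ln k)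
          = zn i k * (-Ln k) + (if k = j then zn i j' * (-Ln j) else 0)
            - (if k = j' then zn i j' * (-Ln j') else 0) := by
        intro k
        by_cases h1 : k = j
        · subst h1; simp [hne]; try ring
        · by_cases h2 : k = j'
          · subst h2; simp [h1, Ne.symm hne]; try ring
          · simp [h1, h2]; try ring
      simp only [this]
      rw [Finset.sum_sub_distrib, Finset.sum_add_distrib]
      simp [Finset.sum_ite_eq']
      ring
    rw [Finset.sum_congr rfl (fun i _ => this i), Finset.sum_add_distrib,
      ← Finset.sum_mul]
  -- witnesses
  have hwit : ∀ k : Fin m, 0 < ∑ i, zn i k → ∃ i, zn i k = 1 := by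
    intro k hk
    by_contra h
    push_neg at h
    have : ∀ i ∈ Finset.univ, zn i k = 0 := by
      intro i _; rcases hin i k with h0 | h1; exact h0; exact absurd h1 (h i)
    rw [Finset.sum_eq_zero this] at hk; exact lt_irrefl 0 hk
  obtain ⟨i0, hi0⟩ := hwit j hpos
  obtain ⟨i1, hi1⟩ := hwit j' hpos'
  have hnem : (Finset.univ : Finset (Fin m)).Nonempty := Finset.univ_nonempty_iff.mpr ⟨⟨0, hm⟩⟩
  -- sup facts
  have hsupj : Finset.univ.sup' hnem (fun i => zn i j) = 1 := by
    apply le_antisymm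
    · exact Finset.sup'_le _ _ fun i _ => hn1 i j
    · calc (1:ℝ) = zn i0 j := hi0.symm
        _ ≤ _ := Finset.le_sup' (fun i => zn i j) (Finset.mem_univ i0)
  have hsupj' : Finset.univ.sup' hnem (fun i => zn i j') = 1 := by
    apply le_antisymm
    · exact Finset.sup'_le _ _ fun i _ => hn1 i j'
    · calc (1:ℝ) = zn i1 j' := hi1.symm
        _ ≤ _ := Finset.le_sup' (fun i => zn i j') (Finset.mem_univ i1)
  have hsup'j : Finset.univ.sup' hnem (fun i => zn' i j) = 1 := by
    apply le_antisymm
    · apply Finset.sup'_le _ _ fun i _ => ?_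
      rcases hzn'01 i j with h | h <;> rw [h] <;> norm_num
    · have : (1:ℝ) ≤ zn' i0 j := by
        simp only [hzn', if_pos rfl]
        have := hn0 i0 j'
        linarith [hi0]
      calc (1:ℝ) ≤ zn' i0 j := this
        _ ≤ _ := Finset.le_sup' (fun i => zn' i j) (Finset.mem_univ i0)
  have hsup'j' : Finset.univ.sup' hnem (fun i => zn' i j') = 0 := by
    have : ∀ i, zn' i j' = 0 := by
      intro i; simp [hzn', (Ne.symm hne)]
    simp only [this]
    exact Finset.sup'_const hnem 0
  have hsupother : ∀ k, k ≠ j → k ≠ j' →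
      Finset.univ.sup' hnem (fun i => zn' i k) = Finset.univ.sup' hnem (fun i => zn i k) := by
    intro k h1 h2
    congr 1
    funext i
    simp [hzn', h1, h2]
  -- sum of sups
  have hsupfun : ∀ k, Finset.univ.sup' hnem (fun i => zn' i k)
      = Finset.univ.sup' hnem (fun i => zn i k) - (if k = j' then 1 else 0) := by
    intro k
    by_cases h1 : k = j
    · subst h1; rw [hsup'j, hsupj]; simp [hne]
    · by_cases h2 : k = j'
      · subst h2; rw [hsup'j', hsupj']; simp
      · rw [hsupother k h1 h2]; simp [h2]
  have hsupsum : ∑ k, Finset.univ.sup' hnem (fun i => zn' i k)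
      = (∑ k, Finset.univ.sup' hnem (fun i => zn i k)) - 1 := by
    simp only [hsupfun]
    rw [Finset.sum_sub_distrib]
    simp [Finset.sum_ite_eq']
  -- objective comparison
  have hS' : 0 < ∑ i, zn i j' := hpos'
  have hdelta : (∑ i, zn i j') * (Ln j' - Ln j) ≤ 0 := by
    apply mul_nonpos_of_nonneg_of_nonpos (le_of_lt hS')
    linarith
  have hobj : mcossObj m r hm (fun _ j => -Lo j) (fun _ j => -Ln j) lam zo zn' <
      mcossObj m r hm (fun _ j => -Lo j) (fun _ j => -Ln j) lam zo zn := by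
    unfold mcossObj
    have hnem' : (Finset.univ.sup' (Finset.univ_nonempty_iff.mpr ⟨⟨0, hm⟩⟩) : (Fin m → ℝ) → ℝ) = Finset.univ.sup' hnem := rfl
    rw [hlin, hsupsum]
    nlinarith
  exact absurd (hopt zo zn' hio hzn'01 hrow') (not_le.mpr hobj)

/-- With `ρ = 0` (so `Qn i j = -Ln j` and `Qo i j = -Lo j`, constant in `i`),
in any integral optimal solution of MCOSS with the `ℓ∞` column regularizer and `λ > 0`,
at most one new index `j` has `∑_i zn_{ij} > 0`, provided the `Ln j` are pairwise distinct. -/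
theorem at_most_one_new_representative (m r : ℕ) (hm : 0 < m)
    (Lo : Fin r → ℝ) (Ln : Fin m → ℝ) (hdist : Function.Injective Ln)
    (lam : ℝ) (hlam : 0 < lam)
    (zo : Fin m → Fin r → ℝ) (zn : Fin m → Fin m → ℝ)
    (hio : ∀ i j, zo i j = 0 ∨ zo i j = 1) (hin : ∀ i j, zn i j = 0 ∨ zn i j = 1)
    (hrow : ∀ i, (∑ j, zo i j) + (∑ j, zn i j) = 1)
    (hopt : ∀ (zo' : Fin m → Fin r → ℝ) (zn' : Fin m → Fin m → ℝ),
      (∀ i j, zo' i j = 0 ∨ zo' i j = 1) → (∀ i j, zn' i j = 0 ∨ zn' i j = 1) →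
      (∀ i, (∑ j, zo' i j) + (∑ j, zn' i j) = 1) →
      mcossObj m r hm (fun _ j => -Lo j) (fun _ j => -Ln j) lam zo zn ≤
        mcossObj m r hm (fun _ j => -Lo j) (fun _ j => -Ln j) lam zo' zn') :
    ∀ j j' : Fin m, (0 < ∑ i, zn i j) → (0 < ∑ i, zn i j') → j = j' := by
  intro j j' hj hj'
  by_contra hne
  rcases le_total (Ln j') (Ln j) with h | h
  · exact mcoss_key m r hm Lo Ln lam hlam zo zn hio hin hrow hopt j j' hne h hj hj'
  · exact mcoss_key m r hm Lo Ln lam hlam zo zn hio hin hrow hopt j' j (Ne.symm hne) h hj' hj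
end

section
/- Let z* be an integral optimal solution of the MCOSS objective with p = ∞, and suppose new frame j is a representative (Σ_i z^n_{ij} ≥ 1) while some old frame k exists. Then for at least one i with z^n_{ij} = 1, Q^n_{ij} ≤ Q^o_{ik} + λ; otherwise reassigning all points represented by j to old frame k would strictly decrease the objective, contradicting optimality. -/
/-- In an integral optimal solution of MCOSS (`p = ∞`, `λ > 0`) with at least
one old frame `k`, if new frame `j` is a representative (`1 ≤ ∑_i zn_{ij}`), then for at
least one `i` with `zn i j = 1` we have `Qn i j ≤ Qo i k + λ`; otherwise reassigning all
points represented by `j` to the old frame `k` would strictly decrease the objective. -/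
theorem representative_beats_old_frame (m r : ℕ) (hm : 0 < m)
    (Qo : Fin m → Fin r → ℝ) (Qn : Fin m → Fin m → ℝ) (lam : ℝ) (hlam : 0 < lam)
    (zo : Fin m → Fin r → ℝ) (zn : Fin m → Fin m → ℝ)
    (hio : ∀ i j, zo i j = 0 ∨ zo i j = 1) (hin : ∀ i j, zn i j = 0 ∨ zn i j = 1)
    (hrow : ∀ i, (∑ j, zo i j) + (∑ j, zn i j) = 1)
    (hopt : ∀ (zo' : Fin m → Fin r → ℝ) (zn' : Fin m → Fin m → ℝ),
      (∀ i j, zo' i j = 0 ∨ zo' i j = 1) → (∀ i j, zn' i j = 0 ∨ zn' i j = 1) →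
      (∀ i, (∑ j, zo' i j) + (∑ j, zn' i j) = 1) →
      mcossObj m r hm Qo Qn lam zo zn ≤ mcossObj m r hm Qo Qn lam zo' zn')
    (j : Fin m) (hrep : (1 : ℝ) ≤ ∑ i, zn i j) (k : Fin r) :
    ∃ i : Fin m, zn i j = 1 ∧ Qn i j ≤ Qo i k + lam := by
  by_contra hcon
  push_neg at hcon
  -- hcon : ∀ i, zn i j = 1 → Qo i k + lam < Qn i j
  have hne : (Finset.univ : Finset (Fin m)).Nonempty := Finset.univ_nonempty_iff.mpr ⟨⟨0, hm⟩⟩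
  have hzo0 : ∀ i j', 0 ≤ zo i j' := fun i j' => by rcases hio i j' with h | h <;> rw [h] <;> norm_num
  have hzn0 : ∀ i j', 0 ≤ zn i j' := fun i j' => by rcases hin i j' with h | h <;> rw [h] <;> norm_num
  -- rows with zn i j = 1 have everything else zero
  have hrowS : ∀ i, zn i j = 1 → (∀ j', zo i j' = 0) ∧ (∀ j', j' ≠ j → zn i j' = 0) := by
    intro i hi
    have h1 : (1 : ℝ) ≤ ∑ j', zn i j' := by
      have := Finset.single_le_sum (f := fun j' => zn i j') (fun j' _ => hzn0 i j')
        (Finset.mem_univ j)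
      simpa [hi] using this
    have h2 : (0 : ℝ) ≤ ∑ j', zo i j' := Finset.sum_nonneg fun j' _ => hzo0 i j'
    have h3 : ∑ j', zo i j' = 0 := by linarith [hrow i]
    have h4 : ∑ j', zn i j' = 1 := by linarith [hrow i]
    constructor
    · intro j'
      exact (Finset.sum_eq_zero_iff_of_nonneg (fun j' _ => hzo0 i j')).mp h3 j' (Finset.mem_univ j')
    · intro j' hj'
      have hsub : ({j, j'} : Finset (Fin m)) ⊆ Finset.univ := Finset.subset_univ _
      have hpair : ∑ x ∈ ({j, j'} : Finset (Fin m)), zn i x = zn i j + zn i j' :=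
        Finset.sum_pair (Ne.symm hj')
      have h5 : zn i j + zn i j' ≤ 1 := by
        rw [← hpair, ← h4]
        exact Finset.sum_le_sum_of_subset_of_nonneg hsub (fun x _ _ => hzn0 i x)
      have h6 := hzn0 i j'
      rw [hi] at h5
      linarith
  -- the modified solution
  set zo' : Fin m → Fin r → ℝ :=
    fun i j' => if zn i j = 1 then (if j' = k then 1 else 0) else zo i j' with hzo'
  set zn' : Fin m → Fin m → ℝ :=
    fun i j' => if zn i j = 1 then 0 else zn i j' with hzn'
  have hio' : ∀ i j', zo' i j' = 0 ∨ zo' i j' = 1 := by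
    intro i j'; simp only [hzo']; split_ifs <;> simp [hio i j']
  have hin' : ∀ i j', zn' i j' = 0 ∨ zn' i j' = 1 := by
    intro i j'; simp only [hzn']; split_ifs <;> simp [hin i j']
  have hrow' : ∀ i, (∑ j', zo' i j') + (∑ j', zn' i j') = 1 := by
    intro i
    by_cases hi : zn i j = 1
    · simp only [hzo', hzn', hi, if_true]
      rw [Finset.sum_ite_eq' Finset.univ k (fun _ => (1:ℝ))]
      simp
    · simp only [hzo', hzn', hi, if_false]
      exact hrow i
  have key := hopt zo' zn' hio' hin' hrow'
  unfold mcossObj at key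
  -- first sum
  have hA : ∀ i, ∑ j', zo' i j' * Qo i j' =
      (∑ j', zo i j' * Qo i j') + (if zn i j = 1 then Qo i k else 0) := by
    intro i
    by_cases hi : zn i j = 1
    · have hz : ∑ j', zo i j' * Qo i j' = 0 :=
        Finset.sum_eq_zero fun j' _ => by rw [(hrowS i hi).1 j', zero_mul]
      simp only [hzo', hi, if_true, hz, zero_add, ite_mul, one_mul, zero_mul]
      rw [Finset.sum_ite_eq' Finset.univ k (fun j' => Qo i j')]
      simp
    · simp [hzo', hi]
  -- second sum
  have hB : ∀ i, ∑ j', zn' i j' * Qn i j' =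
      (∑ j', zn i j' * Qn i j') - (if zn i j = 1 then Qn i j else 0) := by
    intro i
    by_cases hi : zn i j = 1
    · simp only [hzn', hi, if_true]
      have heach : ∀ j' ∈ (Finset.univ : Finset (Fin m)),
          zn i j' * Qn i j' = if j' = j then Qn i j else 0 := by
        intro j' _
        by_cases h : j' = j
        · subst h; rw [hi, one_mul, if_pos rfl]
        · rw [(hrowS i hi).2 j' h, zero_mul, if_neg h]
      have : ∑ j', zn i j' * Qn i j' = Qn i j := by
        rw [Finset.sum_congr rfl heach, Finset.sum_ite_eq' Finset.univ j (fun _ => Qn i j)]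
        simp
      simp [this, hi]
    · simp [hzn', hi]
  -- third sum: column sups
  have hsupeq : ∀ j', j' ≠ j →
      Finset.univ.sup' hne (fun i => zn' i j') = Finset.univ.sup' hne (fun i => zn i j') := by
    intro j' hj'
    apply Finset.sup'_congr hne rfl
    intro i _
    simp only [hzn']
    split_ifs with hi
    · rw [(hrowS i hi).2 j' hj']
    · rfl
  have hsupj' : Finset.univ.sup' hne (fun i => zn' i j) = 0 := by
    have : ∀ i : Fin m, zn' i j = 0 := by
      intro i
      simp only [hzn']
      split_ifs with hi
      · rfl
      · rcases hin i j with h | h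
        · exact h
        · exact absurd h hi
    rw [Finset.sup'_congr hne rfl (fun i _ => this i)]
    exact Finset.sup'_const hne 0
  have hsupj : Finset.univ.sup' hne (fun i => zn i j) = 1 := by
    have hex : ∃ i, zn i j = 1 := by
      by_contra hno
      push_neg at hno
      have : ∑ i, zn i j = 0 := Finset.sum_eq_zero (fun i _ => by
        rcases hin i j with h | h
        · exact h
        · exact absurd h (hno i))
      rw [this] at hrep; linarith
    obtain ⟨i0, hi0⟩ := hex
    apply le_antisymm
    · apply Finset.sup'_le
      intro i _
      rcases hin i j with h | h <;> rw [h] <;> norm_num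
    · rw [← hi0]
      exact Finset.le_sup' (fun i => zn i j) (Finset.mem_univ i0)
  -- rewrite key
  rw [Finset.sum_congr rfl (fun i _ => hA i), Finset.sum_congr rfl (fun i _ => hB i),
    Finset.sum_add_distrib, Finset.sum_sub_distrib] at key
  have hC : ∑ j', Finset.univ.sup' hne (fun i => zn' i j') =
      (∑ j', Finset.univ.sup' hne (fun i => zn i j')) - 1 := by
    rw [Finset.sum_eq_sum_sdiff_singleton_add (Finset.mem_univ j)
      (fun j' => Finset.univ.sup' hne (fun i => zn' i j')),
      Finset.sum_eq_sum_sdiff_singleton_add (Finset.mem_univ j)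
      (fun j' => Finset.univ.sup' hne (fun i => zn i j')), hsupj', hsupj]
    rw [Finset.sum_congr rfl (fun j' hj' =>
      hsupeq j' (by simpa using (Finset.mem_sdiff.mp hj').2))]
    ring
  rw [hC] at key
  -- from key: sum over S of Qn + lam ≤ sum over S of Qo i k
  have key2 : (∑ i, if zn i j = 1 then Qn i j else 0) + lam ≤
      ∑ i, if zn i j = 1 then Qo i k else 0 := by nlinarith [key]
  -- but hcon gives strict reverse
  set S := Finset.univ.filter (fun i => zn i j = 1) with hSdef
  have hSne : S.Nonempty := by
    by_contra hno
    rw [Finset.not_nonempty_iff_eq_empty] at hno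
    have : ∑ i, zn i j = 0 := Finset.sum_eq_zero (fun i _ => by
      rcases hin i j with h | h
      · exact h
      · exact absurd (Finset.mem_filter.mpr ⟨Finset.mem_univ i, h⟩)
          (by rw [← hSdef, hno]; simp))
    rw [this] at hrep; linarith
  have hstrict : ∑ i ∈ S, (Qo i k + lam) < ∑ i ∈ S, Qn i j := by
    apply Finset.sum_lt_sum_of_nonempty hSne
    intro i hi
    exact hcon i (Finset.mem_filter.mp hi).2
  rw [Finset.sum_add_distrib, Finset.sum_const, nsmul_eq_mul] at hstrict
  have h1 : ∑ i, (if zn i j = 1 then Qn i j else 0) = ∑ i ∈ S, Qn i j := by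
    rw [hSdef, Finset.sum_filter]
  have h2 : ∑ i, (if zn i j = 1 then Qo i k else 0) = ∑ i ∈ S, Qo i k := by
    rw [hSdef, Finset.sum_filter]
  rw [h1, h2] at key2
  have hcard : (1 : ℝ) ≤ S.card := by
    have := Finset.card_pos.mpr hSne
    exact_mod_cast this
  nlinarith
end

section
/- If −f is a monotone nondecreasing submodular set function with −f(∅) fixed, then the greedy algorithm that at each of k steps adds the element with the largest marginal gain produces a set S_k with −f(S_k) + f(∅) ≥ (1 − (1 − 1/k)^k)·(−f(S*) + f(∅)) ≥ (1 − 1/e)·(−f(S*) + f(∅)), where S* is an optimal subset of cardinality k, specialized to g(S) = f(∅) − f(S) with f(S) = Σ_{i∈X} min(c_i, min_{j∈S} Q_{ij}) and c_i = min_{j∈R} Q_{ij}. -/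
section Aux
set_option linter.unusedSectionVars false

variable {α : Type*} [DecidableEq α]

/-- Auxiliary: truncated min function. -/
noncomputable def auxM (q : α → ℝ) (c : ℝ) (A : Finset α) : ℝ :=
  (insert c (A.image q)).min' (Finset.insert_nonempty _ _)

lemma auxM_empty (q : α → ℝ) (c : ℝ) : auxM q c ∅ = c := by
  simp [auxM]

lemma auxM_anti (q : α → ℝ) (c : ℝ) {A B : Finset α} (h : A ⊆ B) :
    auxM q c B ≤ auxM q c A :=
  Finset.min'_subset _ (Finset.insert_subset_insert _ (Finset.image_subset_image h))

lemma auxM_le (q : α → ℝ) (c : ℝ) {x : α} {A : Finset α} (hx : x ∈ A) :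
    auxM q c A ≤ q x :=
  Finset.min'_le _ _ (Finset.mem_insert_of_mem (Finset.mem_image_of_mem _ hx))

lemma auxM_insert (q : α → ℝ) (c : ℝ) (x : α) (A : Finset α) :
    auxM q c (insert x A) = min (q x) (auxM q c A) := by
  apply le_antisymm
  · apply le_min
    · exact auxM_le q c (Finset.mem_insert_self x A)
    · exact auxM_anti q c (Finset.subset_insert x A)
  · apply Finset.le_min'
    intro b hb
    rcases Finset.mem_insert.1 hb with rfl | hb
    · exact le_trans (min_le_right _ _)
        (Finset.min'_le _ _ (Finset.mem_insert_self _ _))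
    · obtain ⟨y, hy, rfl⟩ := Finset.mem_image.1 hb
      rcases Finset.mem_insert.1 hy with rfl | hy
      · exact min_le_left _ _
      · exact le_trans (min_le_right _ _) (auxM_le q c hy)

lemma auxM_submodular (q : α → ℝ) (c : ℝ) (T A : Finset α) :
    auxM q c A - auxM q c (T ∪ A) ≤
      ∑ x ∈ T \ A, (auxM q c A - auxM q c (insert x A)) := by
  classical
  induction T using Finset.induction_on with
  | empty => simp
  | @insert y T' hy ih =>
    rw [Finset.insert_union, auxM_insert]
    by_cases hyA : y ∈ A
    · rw [Finset.insert_sdiff_of_mem _ hyA]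
      have h1 : auxM q c (T' ∪ A) ≤ q y :=
        auxM_le q c (Finset.mem_union_right _ hyA)
      rw [min_eq_right h1]
      exact ih
    · rw [Finset.insert_sdiff_of_notMem _ hyA,
        Finset.sum_insert (by simp [hy]), auxM_insert]
      have hsum : (0:ℝ) ≤ ∑ x ∈ T' \ A, (auxM q c A - auxM q c (insert x A)) := by
        apply Finset.sum_nonneg
        intro x _
        have := auxM_anti q c (Finset.subset_insert x A)
        linarith
      have hmin1 : min (q y) (auxM q c A) ≤ q y := min_le_left _ _
      have hmin2 : min (q y) (auxM q c A) ≤ auxM q c A := min_le_right _ _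
      rcases le_total (q y) (auxM q c (T' ∪ A)) with h | h
      · rw [min_eq_left h]; linarith
      · rw [min_eq_right h]; linarith

end Aux

/-- Nemhauser–Wolsey–Fisher guarantee for the greedy algorithm applied to
the normalized monotone submodular gain `g S = f ∅ - f S`, with
`f S = ∑_{i∈X} min(c_i, min_{j∈S} Qn i j)` and `c_i = min_{j∈R} Qo i j`: after `k` greedy
steps, `g (S k) ≥ (1 - (1 - 1/k)^k) * g S* ≥ (1 - 1/e) * g S*` for any optimal `S*` of
cardinality `k`. -/
theorem greedy_one_minus_inv_e {ι κ : Type*} [Fintype ι] [DecidableEq ι]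
    (R : Finset κ) (hR : R.Nonempty) (Qo : ι → κ → ℝ) (Qn : ι → ι → ℝ)
    (g : Finset ι → ℝ)
    (hg : ∀ S : Finset ι,
      g S = ∑ i : ι,
        (R.inf' hR (Qo i) -
          (insert (R.inf' hR (Qo i)) (S.image (Qn i))).min' (Finset.insert_nonempty _ _)))
    (k : ℕ) (hk : 0 < k)
    (S : ℕ → Finset ι) (hS0 : S 0 = ∅)
    (hgreedy : ∀ t < k, ∃ x : ι, x ∉ S t ∧ S (t + 1) = insert x (S t) ∧
      ∀ y : ι, g (insert y (S t)) ≤ g (insert x (S t)))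
    (Sstar : Finset ι) (hcard : Sstar.card = k)
    (hstar : ∀ T : Finset ι, T.card = k → g T ≤ g Sstar) :
    (1 - (1 - 1 / (k : ℝ)) ^ k) * g Sstar ≤ g (S k) ∧
      (1 - 1 / Real.exp 1) * g Sstar ≤ g (S k) := by
  classical
  set ci : ι → ℝ := fun i => R.inf' hR (Qo i) with hci
  have hg' : ∀ A : Finset ι, g A = ∑ i : ι, (ci i - auxM (Qn i) (ci i) A) := hg
  have hkpos : (0:ℝ) < k := by exact_mod_cast hk
  have hk1 : (1:ℝ) ≤ k := by exact_mod_cast hk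
  -- monotonicity
  have gmono : ∀ {A B : Finset ι}, A ⊆ B → g A ≤ g B := by
    intro A B hAB
    rw [hg', hg']
    apply Finset.sum_le_sum
    intro i _
    have := auxM_anti (Qn i) (ci i) hAB
    linarith
  have gempty : g ∅ = 0 := by
    rw [hg']
    simp [auxM_empty]
  have gSstar_nonneg : 0 ≤ g Sstar := by
    have := gmono (Finset.empty_subset Sstar)
    linarith [gempty]
  -- submodular sum bound
  have gsub : ∀ T A : Finset ι,
      g (T ∪ A) - g A ≤ ∑ x ∈ T \ A, (g (insert x A) - g A) := by
    intro T A
    have h1 : g (T ∪ A) - g A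
        = ∑ i : ι, (auxM (Qn i) (ci i) A - auxM (Qn i) (ci i) (T ∪ A)) := by
      rw [hg', hg', ← Finset.sum_sub_distrib]
      congr 1; ext i; ring
    have h2 : ∀ x : ι, g (insert x A) - g A
        = ∑ i : ι, (auxM (Qn i) (ci i) A - auxM (Qn i) (ci i) (insert x A)) := by
      intro x
      rw [hg', hg', ← Finset.sum_sub_distrib]
      congr 1; ext i; ring
    rw [h1]
    calc ∑ i : ι, (auxM (Qn i) (ci i) A - auxM (Qn i) (ci i) (T ∪ A))
        ≤ ∑ i : ι, ∑ x ∈ T \ A,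
            (auxM (Qn i) (ci i) A - auxM (Qn i) (ci i) (insert x A)) := by
          apply Finset.sum_le_sum
          intro i _
          exact auxM_submodular (Qn i) (ci i) T A
      _ = ∑ x ∈ T \ A, ∑ i : ι,
            (auxM (Qn i) (ci i) A - auxM (Qn i) (ci i) (insert x A)) :=
          Finset.sum_comm
      _ = ∑ x ∈ T \ A, (g (insert x A) - g A) := by
          apply Finset.sum_congr rfl
          intro x _
          exact (h2 x).symm
  -- greedy step inequality
  have step : ∀ t < k, g Sstar - g (S (t + 1)) ≤ (1 - 1 / (k:ℝ)) * (g Sstar - g (S t)) := by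
    intro t ht
    obtain ⟨x, _, hSt1, hbest⟩ := hgreedy t ht
    have hmonostep : g (S t) ≤ g (S (t + 1)) := by
      rw [hSt1]; exact gmono (Finset.subset_insert _ _)
    have h1 : g Sstar ≤ g (Sstar ∪ S t) := gmono Finset.subset_union_left
    have h2 := gsub Sstar (S t)
    have h3 : ∑ x' ∈ Sstar \ S t, (g (insert x' (S t)) - g (S t))
        ≤ (Sstar \ S t).card • (g (S (t + 1)) - g (S t)) := by
      apply Finset.sum_le_card_nsmul
      intro x' _
      have := hbest x'
      rw [hSt1]
      linarith
    have hcard2 : ((Sstar \ S t).card : ℝ) ≤ (k : ℝ) := by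
      have : (Sstar \ S t).card ≤ Sstar.card := Finset.card_le_card (Finset.sdiff_subset)
      exact_mod_cast this.trans_eq hcard
    have h4 : ((Sstar \ S t).card : ℝ) * (g (S (t + 1)) - g (S t))
        ≤ (k : ℝ) * (g (S (t + 1)) - g (S t)) :=
      mul_le_mul_of_nonneg_right hcard2 (by linarith)
    rw [nsmul_eq_mul] at h3
    -- so: g Sstar - g (S t) ≤ k * (g (S (t+1)) - g (S t))
    have key : g Sstar - g (S t) ≤ (k : ℝ) * (g (S (t + 1)) - g (S t)) := by linarith
    have hexp : (k:ℝ) * ((1 - 1 / (k:ℝ)) * (g Sstar - g (S t)))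
        = (k:ℝ) * (g Sstar - g (S t)) - (g Sstar - g (S t)) := by
      field_simp
    have : (k:ℝ) * (g Sstar - g (S (t + 1)))
        ≤ (k:ℝ) * ((1 - 1 / (k:ℝ)) * (g Sstar - g (S t))) := by
      rw [hexp]; nlinarith
    exact le_of_mul_le_mul_left this hkpos
  have hfac : (0:ℝ) ≤ 1 - 1 / (k:ℝ) := by
    have : 1 / (k:ℝ) ≤ 1 := by
      rw [div_le_one hkpos]; exact hk1
    linarith
  -- iterate
  have hiter : ∀ t, t ≤ k → g Sstar - g (S t) ≤ (1 - 1 / (k:ℝ)) ^ t * g Sstar := by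
    intro t
    induction t with
    | zero => intro _; simp [hS0, gempty]
    | succ t ih =>
      intro ht
      have ht' : t < k := Nat.lt_of_succ_le ht
      have h1 := step t ht'
      have h2 := ih (le_of_lt ht')
      calc g Sstar - g (S (t + 1)) ≤ (1 - 1 / (k:ℝ)) * (g Sstar - g (S t)) := h1
        _ ≤ (1 - 1 / (k:ℝ)) * ((1 - 1 / (k:ℝ)) ^ t * g Sstar) :=
            mul_le_mul_of_nonneg_left h2 hfac
        _ = (1 - 1 / (k:ℝ)) ^ (t + 1) * g Sstar := by ring
  have hmain := hiter k le_rfl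
  have first : (1 - (1 - 1 / (k : ℝ)) ^ k) * g Sstar ≤ g (S k) := by
    have : (1 - (1 - 1 / (k : ℝ)) ^ k) * g Sstar
        = g Sstar - (1 - 1 / (k:ℝ)) ^ k * g Sstar := by ring
    linarith
  refine ⟨first, ?_⟩
  -- (1 - 1/k)^k ≤ 1/e
  have h1 : 1 - 1 / (k:ℝ) ≤ Real.exp (-(1 / (k:ℝ))) := by
    have := Real.add_one_le_exp (-(1 / (k:ℝ)))
    linarith
  have h2 : (1 - 1 / (k:ℝ)) ^ k ≤ Real.exp (-(1 / (k:ℝ))) ^ k :=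
    pow_le_pow_left₀ hfac h1 k
  have h3 : Real.exp (-(1 / (k:ℝ))) ^ k = Real.exp (-1) := by
    rw [← Real.exp_nat_mul]
    congr 1
    field_simp
  have h4 : (1 - 1 / (k:ℝ)) ^ k ≤ 1 / Real.exp 1 := by
    rw [h3, Real.exp_neg] at h2
    simpa [one_div] using h2
  have h5 : (1 - 1 / Real.exp 1) * g Sstar ≤ (1 - (1 - 1 / (k:ℝ)) ^ k) * g Sstar :=
    mul_le_mul_of_nonneg_right (by linarith) gSstar_nonneg
  linarith
end
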